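/- arXiv:math/0506578 — 4 statements merged into one kernel-verified Lean document; each statement's English description precedes it below -/
import Mathlib

section
/- Fix n > 1, let r ≤ n, and let i₁ < i₂ < ⋯ < i_r be integers with 1 ≤ i₁ and i_r ≤ n. Then the preimage φ_{i₁}⁻¹(span(φ_{i₂}(V(n)) ∪ ⋯ ∪ φ_{i_r}(V(n)))) is exactly the span of the basis vectors v[a,b] with a, b ∈ {i₂, …, i_r} and a > b; consequently the intersection φ_{i₁}(V(n)) ∩ span(φ_{i₂}(V(n)) ∪ ⋯ ∪ φ_{i_r}(V(n))) has dimension C(r−1, 2). -/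
open Submodule

/-- Index type for the distinguished basis of `V(n)`: pairs `(j,i)` with `i < j`. -/
abbrev VIdx (n : ℕ) := {q : Fin n × Fin n // q.2 < q.1}

/-- Index type for the distinguished basis of `W(n)`: triples `(j,i,k)` with `i < j`, `i ≤ k`. -/
abbrev WIdx (n : ℕ) := {t : Fin n × Fin n × Fin n // t.2.1 < t.1 ∧ t.2.1 ≤ t.2.2}

/-- The vector space `V(n)` over `F`. -/
abbrev V (F : Type*) [Field F] (n : ℕ) := VIdx n → F

/-- The vector space `W(n)` over `F`. -/
abbrev W (F : Type*) [Field F] (n : ℕ) := WIdx n → F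

variable (F : Type*) [Field F] (n : ℕ)

/-- The vector `v[j,i]`, with the conventions `v[i,j] = -v[j,i]` and `v[i,i] = 0`. -/
noncomputable def v (j i : Fin n) : V F n :=
  if h : i < j then Pi.single (⟨(j, i), h⟩ : VIdx n) 1
  else if h' : j < i then -Pi.single (⟨(i, j), h'⟩ : VIdx n) 1
  else 0

/-- The vector `w[j,i,k]` (the basis vector when `i < j` and `i ≤ k`, zero otherwise). -/
noncomputable def w (j i k : Fin n) : W F n :=
  if h : i < j ∧ i ≤ k then Pi.single (⟨(j, i, k), h⟩ : WIdx n) 1 else 0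

/-- The linear map `φ_k : V(n) → W(n)` determined on basis vectors by
`φ_k(v[j,i]) = w[j,i,k]` if `i ≤ k`, and `φ_k(v[j,i]) = w[j,k,i] - w[i,k,j]` if `k < i`. -/
noncomputable def phi (k : Fin n) : V F n →ₗ[F] W F n :=
  (Pi.basisFun F (VIdx n)).constr F fun q =>
    if q.1.2 ≤ k then w F n q.1.1 q.1.2 k
    else w F n q.1.1 k q.1.2 - w F n q.1.2 k q.1.1

/-- The linear map `Φ_n : V(n)ⁿ → W(n)`, `Φ_n(x₁,…,x_n) = φ₁(x₁) + ⋯ + φ_n(x_n)`. -/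
noncomputable def Phi : (Fin n → V F n) →ₗ[F] W F n :=
  ∑ k : Fin n, (phi F n k).comp (LinearMap.proj k)

/-- For `X ≤ V(n)`, the subspace `X* ≤ W(n)`: the span of `φ₁(X) ∪ ⋯ ∪ φ_n(X)`. -/
noncomputable def starV (X : Submodule F (V F n)) : Submodule F (W F n) :=
  ⨆ k : Fin n, X.map (phi F n k)

/-- For `Y ≤ W(n)`, the subspace `Y* ≤ V(n)`: the intersection `⋂ₖ φ_k⁻¹(Y)`. -/
noncomputable def starW (Y : Submodule F (W F n)) : Submodule F (V F n) :=
  ⨅ k : Fin n, Y.comap (phi F n k)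

/-!
For `k < i < j` the basis vectors satisfy `φ_k(v[j,i]) = φ_i(v[j,k]) - φ_j(v[i,k])`, so every
`v[a,b]` with `a, b ∈ {i₂, …, i_r}` lies in the preimage. Conversely, the coordinate `w[J,m,K]`
vanishes on `φ_l(V(n))` unless `l ∈ {m, K}`, while the coordinates `w[j,i,k]` (for `i ≤ k`)
and `w[j,k,i]`, `w[i,k,j]` (for `k < i`) of `φ_k(x)` are `±x[j,i]`. Taking `k = i₁`, a vector
of the preimage can therefore only have nonzero coordinates `x[j,i]` with `i, j ∈ {i₂, …, i_r}`.
Since `φ_{i₁}` is injective, the intersection is the isomorphic image of the preimage.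
-/

lemma Submodule.finrank_range_inf_of_injective {R M N : Type*} [Ring R] [AddCommGroup M]
    [AddCommGroup N] [Module R M] [Module R N] {f : M →ₗ[R] N} (hf : Function.Injective f)
    (q : Submodule R N) :
    Module.finrank R ↥(LinearMap.range f ⊓ q) = Module.finrank R (q.comap f) := by
  rw [← Submodule.map_comap_eq]
  exact (Submodule.equivMapOfInjective f hf _).finrank_eq.symm

variable {F n}

lemma w_apply (j i k : Fin n) (T : WIdx n) :
    w F n j i k T = if T.1 = (j, i, k) then 1 else 0 := by
  obtain ⟨⟨a, b, c⟩, hba, hbc⟩ := T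
  dsimp only at hba hbc
  unfold w
  split_ifs with h hT hT
  · simp_all
  · simp_all
  · obtain ⟨rfl, rfl, rfl⟩ := Prod.ext_iff.mp hT
    exact absurd ⟨hba, hbc⟩ h
  · rfl

lemma phi_single (k : Fin n) (q : VIdx n) :
    phi F n k (Pi.single q 1) =
      if q.1.2 ≤ k then w F n q.1.1 q.1.2 k
      else w F n q.1.1 k q.1.2 - w F n q.1.2 k q.1.1 := by
  rw [phi, ← Pi.basisFun_apply, Module.Basis.constr_basis]

lemma phi_apply (k : Fin n) (x : V F n) (T : WIdx n) :
    phi F n k x T = ∑ q, x q * phi F n k (Pi.single q 1) T := by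
  conv_lhs => rw [← (Pi.basisFun F (VIdx n)).sum_equivFun x]
  simp [map_sum, Finset.sum_apply]

lemma phi_single_apply (k : Fin n) (q : VIdx n) (T : WIdx n) :
    phi F n k (Pi.single q 1) T =
      if q.1.2 ≤ k then (if T.1 = (q.1.1, q.1.2, k) then 1 else 0)
      else (if T.1 = (q.1.1, k, q.1.2) then 1 else 0) -
        (if T.1 = (q.1.2, k, q.1.1) then 1 else 0) := by
  rw [phi_single, apply_ite (fun f : W F n => f T), Pi.sub_apply, w_apply, w_apply, w_apply]

lemma phi_apply_eq_zero_of_ne (l : Fin n) (x : V F n) {J m K : Fin n} (h : m < J ∧ m ≤ K)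
    (hm : m ≠ l) (hK : K ≠ l) : phi F n l x ⟨(J, m, K), h⟩ = 0 := by
  rw [phi_apply]
  exact Finset.sum_eq_zero fun q _ => by simp [phi_single_apply, hm, hK]

lemma phi_apply_of_le (k : Fin n) (x : V F n) {j i : Fin n} (hij : i < j) (hik : i ≤ k) :
    phi F n k x ⟨(j, i, k), hij, hik⟩ = x ⟨(j, i), hij⟩ := by
  rw [phi_apply, Finset.sum_eq_single ⟨(j, i), hij⟩ (fun q _ hq => ?_) (by simp)]
  · simp [phi_single_apply, hik]
  · simp only [phi_single_apply]
    split_ifs <;> grind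

lemma phi_apply_of_lt (k : Fin n) (x : V F n) {j i : Fin n} (hij : i < j) (hki : k < i) :
    phi F n k x ⟨(j, k, i), hki.trans hij, hki.le⟩ = x ⟨(j, i), hij⟩ := by
  rw [phi_apply, Finset.sum_eq_single ⟨(j, i), hij⟩ (fun q _ hq => ?_) (by simp)]
  · simp [phi_single_apply, hki.not_ge, hij.ne, hij.ne']
  · simp only [phi_single_apply]
    split_ifs <;> grind

lemma phi_apply_of_lt_swap (k : Fin n) (x : V F n) {j i : Fin n} (hij : i < j) (hki : k < i) :
    phi F n k x ⟨(i, k, j), hki, (hki.trans hij).le⟩ = -x ⟨(j, i), hij⟩ := by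
  rw [phi_apply, Finset.sum_eq_single ⟨(j, i), hij⟩ (fun q _ hq => ?_) (by simp)]
  · simp [phi_single_apply, hki.not_ge, hij.ne, hij.ne']
  · simp only [phi_single_apply]
    split_ifs <;> grind

lemma v_of_lt {j i : Fin n} (h : i < j) : v F n j i = Pi.single ⟨(j, i), h⟩ 1 := dif_pos h

lemma phi_v_of_lt_of_lt {k i j : Fin n} (hki : k < i) (hij : i < j) :
    phi F n k (v F n j i) = phi F n i (v F n j k) - phi F n j (v F n i k) := by
  rw [v_of_lt hij, v_of_lt (hki.trans hij), v_of_lt hki, phi_single, phi_single, phi_single,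
    if_neg hki.not_ge, if_pos hki.le, if_pos (hki.trans hij).le]

lemma phi_injective (k : Fin n) : Function.Injective (phi F n k) := by
  refine (injective_iff_map_eq_zero _).mpr fun x hx => funext fun ⟨⟨j, i⟩, hij⟩ => ?_
  rcases le_or_gt i k with hik | hki
  · rw [← phi_apply_of_le k x hij hik, hx, Pi.zero_apply, Pi.zero_apply]
  · rw [← phi_apply_of_lt k x hij hki, hx, Pi.zero_apply, Pi.zero_apply]

section Family

variable {ι : Type*} {κ : ι → Fin n}

lemma apply_eq_zero_of_mem_iSup_range_phi {y : W F n}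
    (hy : y ∈ ⨆ t, LinearMap.range (phi F n (κ t))) {J m K : Fin n} (h : m < J ∧ m ≤ K)
    (hm : m ∉ Set.range κ) (hK : K ∉ Set.range κ) : y ⟨(J, m, K), h⟩ = 0 := by
  suffices ⨆ t, LinearMap.range (phi F n (κ t)) ≤
      LinearMap.ker (LinearMap.proj ⟨(J, m, K), h⟩) from this hy
  refine iSup_le fun t => ?_
  rintro _ ⟨x, rfl⟩
  exact phi_apply_eq_zero_of_ne _ x h (fun e => hm ⟨t, e.symm⟩) (fun e => hK ⟨t, e.symm⟩)

lemma mem_range_of_phi_mem_iSup_range_phi {k : Fin n} (hk : ∀ t, k < κ t) {x : V F n}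
    (hx : phi F n k x ∈ ⨆ t, LinearMap.range (phi F n (κ t)))
    {j i : Fin n} (hij : i < j) (hxji : x ⟨(j, i), hij⟩ ≠ 0) :
    i ∈ Set.range κ ∧ j ∈ Set.range κ := by
  have hk' : k ∉ Set.range κ := fun ⟨t, ht⟩ => (hk t).ne' ht
  rcases le_or_gt i k with hik | hki
  · have hi : i ∉ Set.range κ := fun ⟨t, ht⟩ => (ht ▸ hk t).not_ge hik
    rw [← phi_apply_of_le k x hij hik, apply_eq_zero_of_mem_iSup_range_phi hx _ hi hk'] at hxji
    exact absurd rfl hxji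
  constructor <;> by_contra hnot
  · rw [← phi_apply_of_lt k x hij hki, apply_eq_zero_of_mem_iSup_range_phi hx _ hk' hnot] at hxji
    exact absurd rfl hxji
  · rw [← neg_ne_zero, ← phi_apply_of_lt_swap k x hij hki,
      apply_eq_zero_of_mem_iSup_range_phi hx _ hk' hnot] at hxji
    exact absurd rfl hxji

lemma comap_phi_iSup_range_phi {k : Fin n} (hk : ∀ t, k < κ t) :
    (⨆ t, LinearMap.range (phi F n (κ t))).comap (phi F n k) =
      span F {x | ∃ a b, κ b < κ a ∧ x = v F n (κ a) (κ b)} := by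
  refine le_antisymm (fun x hx => ?_) (span_le.mpr ?_)
  · rw [← (Pi.basisFun F (VIdx n)).sum_equivFun x]
    refine sum_mem fun ⟨⟨j, i⟩, hij⟩ _ => ?_
    by_cases hxji : x ⟨(j, i), hij⟩ = 0
    · simp [hxji]
    obtain ⟨⟨b, rfl⟩, ⟨a, rfl⟩⟩ := mem_range_of_phi_mem_iSup_range_phi hk hx hij hxji
    exact smul_mem _ _ (subset_span ⟨a, b, hij, by rw [Pi.basisFun_apply, v_of_lt]⟩)
  · rintro _ ⟨a, b, hba, rfl⟩
    rw [SetLike.mem_coe, mem_comap, phi_v_of_lt_of_lt (hk b) hba]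
    exact sub_mem (mem_iSup_of_mem b (LinearMap.mem_range_self _ _))
      (mem_iSup_of_mem a (LinearMap.mem_range_self _ _))

lemma finrank_span_v_of_strictMono [Fintype ι] [LinearOrder ι] (hκ : StrictMono κ) :
    Module.finrank F (span F {x | ∃ a b, b < a ∧ x = v F n (κ a) (κ b)}) =
      (Fintype.card ι).choose 2 := by
  let e : {p : ι × ι // p.1 < p.2} → VIdx n := fun p => ⟨(κ p.1.2, κ p.1.1), hκ p.2⟩
  have he : Function.Injective e := fun p q hpq => by
    simp only [e, Subtype.mk.injEq, Prod.mk.injEq, hκ.injective.eq_iff] at hpq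
    exact Subtype.ext (Prod.ext hpq.2 hpq.1)
  have hrange :
      {x | ∃ a b, b < a ∧ x = v F n (κ a) (κ b)} = Set.range (Pi.basisFun F _ ∘ e) := by
    refine Set.ext fun x => ⟨?_, ?_⟩
    · rintro ⟨a, b, hba, rfl⟩
      exact ⟨⟨(b, a), hba⟩, by rw [Function.comp_apply, Pi.basisFun_apply, v_of_lt]⟩
    · rintro ⟨⟨⟨b, a⟩, hba⟩, rfl⟩
      exact ⟨a, b, hba, by rw [Function.comp_apply, Pi.basisFun_apply, v_of_lt]⟩
  rw [hrange, finrank_span_eq_card ((Pi.basisFun F _).linearIndependent.comp e he),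
    Fintype.card_subtype, Fintype.card_product_filter_lt]

end Family

theorem statement3_general (p : ℕ) [Fact p.Prime] (n : ℕ)
    (r : ℕ) (ι : Fin (r + 1) → Fin n) (hι : StrictMono ι) :
    Submodule.comap (phi (ZMod p) n (ι 0))
        (⨆ t : Fin r, LinearMap.range (phi (ZMod p) n (ι t.succ))) =
      Submodule.span (ZMod p)
        {x : V (ZMod p) n | ∃ a b : Fin r, b < a ∧ x = v (ZMod p) n (ι a.succ) (ι b.succ)} ∧
    Module.finrank (ZMod p)
        ↥(LinearMap.range (phi (ZMod p) n (ι 0)) ⊓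
          ⨆ t : Fin r, LinearMap.range (phi (ZMod p) n (ι t.succ))) = r.choose 2 := by
  have hcomap := comap_phi_iSup_range_phi (F := ZMod p) (κ := fun t : Fin r => ι t.succ)
    fun t => hι t.succ_pos
  simp only [hι.lt_iff_lt, Fin.succ_lt_succ_iff] at hcomap
  refine ⟨hcomap, ?_⟩
  rw [Submodule.finrank_range_inf_of_injective (phi_injective _), hcomap,
    finrank_span_v_of_strictMono (κ := fun t : Fin r => ι t.succ) (hι.comp Fin.strictMono_succ),
    Fintype.card_fin]

/-- Let `i₁ < i₂ < ⋯ < i_{r+1}` be indices in `{1,…,n}` (given by a strictly monotone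
`ι : Fin (r+1) → Fin n`).  Then the preimage under `φ_{i₁}` of the span of the images
`φ_{i₂}(V(n)), …, φ_{i_{r+1}}(V(n))` is exactly the span of the vectors `v[a,b]` with
`a, b ∈ {i₂,…,i_{r+1}}` and `a > b`; consequently the intersection
`φ_{i₁}(V(n)) ∩ span(φ_{i₂}(V(n)) ∪ ⋯)` has dimension `C(r,2)` (with `r+1` indices in all,
this is `C((r+1)-1, 2)`). -/
theorem statement3 (p : ℕ) [Fact p.Prime] (hp2 : p ≠ 2) (n : ℕ) (hn : 1 < n)
    (r : ℕ) (hr : r + 1 ≤ n) (ι : Fin (r + 1) → Fin n) (hι : StrictMono ι) :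
    Submodule.comap (phi (ZMod p) n (ι 0))
        (⨆ t : Fin r, LinearMap.range (phi (ZMod p) n (ι t.succ))) =
      Submodule.span (ZMod p)
        {x : V (ZMod p) n | ∃ a b : Fin r, b < a ∧ x = v (ZMod p) n (ι a.succ) (ι b.succ)} ∧
    Module.finrank (ZMod p)
        ↥(LinearMap.range (phi (ZMod p) n (ι 0)) ⊓
          ⨆ t : Fin r, LinearMap.range (phi (ZMod p) n (ι t.succ))) = r.choose 2 :=
  statement3_general p n r ι hι
end

section
/- Fix n > 1 and let X be a subspace of V(n). If dim(X) = 1 then dim(X*) = n, and if dim(X) = 2 then dim(X*) = 2n. -/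
open Submodule

variable (F : Type*) [Field F] (n : ℕ)

/-!
Write `T k a b` for the coefficient of `v[a,b]` in `f k`. Evaluating `∑ₖ φ_k (f k)` on the basis
of `W(n)` shows that it vanishes only if `T` is alternating: `T b a b = 0` and
`T k a b = T b k a`. If such a `T` is nonzero, say `T m j i ≠ 0`, then reading `f m`, `f i`, `f j`
off at `v[j,i]`, `v[m,j]`, `v[m,i]` gives a diagonal matrix with entries `±T m j i`, so these three
vectors are independent. Hence for `dim X ≤ 2` the map `Xⁿ → W(n)`, `x ↦ ∑ₖ φ_k (x k)`, is
injective; its image is `X*`, so `dim X* = n · dim X`.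
-/

section

variable {F n}

/-- The coefficient of `v[a,b]`, read with the convention `v[a,b] = -v[b,a]`. -/
noncomputable def V.coord (a b : Fin n) : V F n →ₗ[F] F :=
  if h : b < a then LinearMap.proj (⟨(a, b), h⟩ : VIdx n)
  else if h' : a < b then -LinearMap.proj (⟨(b, a), h'⟩ : VIdx n) else 0

lemma V.coord_of_lt {a b : Fin n} (h : b < a) (x : V F n) : V.coord a b x = x ⟨(a, b), h⟩ := by
  simp [V.coord, h]

lemma V.coord_swap (a b : Fin n) (x : V F n) : V.coord a b x = -V.coord b a x := by
  rcases lt_trichotomy a b with h | rfl | h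
  · simp [V.coord, h, h.not_gt]
  · simp [V.coord]
  · simp [V.coord, h, h.not_gt]

@[simp] lemma V.coord_self (a : Fin n) (x : V F n) : V.coord a a x = 0 := by
  unfold V.coord; simp

lemma phi_apply_mk (k : Fin n) (x : V F n) {a b c : Fin n} (hba : b < a) (hbc : b ≤ c) :
    phi F n k x ⟨(a, b, c), hba, hbc⟩ =
      (if k = c then V.coord a b x else 0) + (if k = b ∧ b < c then V.coord a c x else 0) := by
  -- both sides are linear in `x`, so it suffices to compare them on the standard basis
  let L : V F n →ₗ[F] F :=
    (if k = c then V.coord a b else 0) + (if k = b ∧ b < c then V.coord a c else 0)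
  suffices (LinearMap.proj ⟨(a, b, c), hba, hbc⟩).comp (phi F n k) = L by
    have hx := LinearMap.congr_fun this x
    rw [LinearMap.comp_apply, LinearMap.proj_apply] at hx
    rw [hx]
    simp only [L, LinearMap.add_apply]
    split_ifs <;> simp
  refine (Pi.basisFun F (VIdx n)).ext fun q => ?_
  obtain ⟨⟨j, i⟩, hij : i < j⟩ := q
  simp only [LinearMap.comp_apply, phi, Module.Basis.constr_basis, L]
  simp only [Pi.basisFun_apply, V.coord, w]
  split_ifs <;> simp [Pi.single_apply, Subtype.ext_iff] <;> (try split_ifs) <;> first | omega | simp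

lemma Phi_apply (f : Fin n → V F n) : Phi F n f = ∑ k, phi F n k (f k) := by
  simp [Phi]

lemma Phi_comp_single (k : Fin n) :
    Phi F n ∘ₗ LinearMap.single F (fun _ => V F n) k = phi F n k := by
  refine LinearMap.ext fun x => ?_
  simp [Phi_apply, Pi.single_apply, apply_ite]

lemma Phi_apply_mk (f : Fin n → V F n) {a b c : Fin n} (hba : b < a) (hbc : b ≤ c) :
    Phi F n f ⟨(a, b, c), hba, hbc⟩ =
      V.coord a b (f c) + if b < c then V.coord a c (f b) else 0 := by
  rw [Phi_apply, Finset.sum_apply, Finset.sum_congr rfl fun k _ => phi_apply_mk k (f k) hba hbc,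
    Finset.sum_add_distrib]
  simp [ite_and]

section PhiKernel

variable {f : Fin n → V F n} (hf : Phi F n f = 0)
include hf

lemma coord_apply_self_of_Phi_eq_zero (a b : Fin n) : V.coord a b (f b) = 0 := by
  rcases lt_trichotomy b a with hba | rfl | hab
  · have h := congr_fun hf ⟨(a, b, b), hba, le_rfl⟩
    rwa [Phi_apply_mk f hba le_rfl, if_neg (lt_irrefl b), add_zero] at h
  · exact V.coord_self b _
  · have h := congr_fun hf ⟨(b, a, b), hab, hab.le⟩
    rw [Phi_apply_mk f hab hab.le, if_pos hab, V.coord_self, add_zero, Pi.zero_apply] at h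
    rw [V.coord_swap, h, neg_zero]

lemma coord_cyclic_of_Phi_eq_zero (k a b : Fin n) :
    V.coord a b (f k) = V.coord k a (f b) := by
  have base {a b c : Fin n} (hba : b < a) (hbc : b < c) :
      V.coord a b (f c) = V.coord c a (f b) := by
    have h := congr_fun hf ⟨(a, b, c), hba, hbc.le⟩
    rw [Phi_apply_mk f hba hbc.le, if_pos hbc, Pi.zero_apply] at h
    rw [V.coord_swap c]
    linear_combination h
  have hself := coord_apply_self_of_Phi_eq_zero hf
  rcases eq_or_ne a b with rfl | hab
  · rw [V.coord_self, hself]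
  rcases eq_or_ne k a with rfl | hka
  · rw [V.coord_swap, hself, V.coord_self, neg_zero]
  rcases eq_or_ne k b with rfl | hkb
  · rw [hself, V.coord_swap, hself, neg_zero]
  obtain ⟨hba, hbk⟩ | ⟨hka, hkb⟩ | ⟨hak, hab⟩ :
      (b < a ∧ b < k) ∨ (k < a ∧ k < b) ∨ (a < k ∧ a < b) := by omega
  · exact base hba hbk
  · rw [V.coord_swap k a, base hka hkb, V.coord_swap b a, neg_neg]
  · rw [base hak hab, V.coord_swap a b, base hab hak, V.coord_swap k b, neg_neg]

lemma linearIndependent_of_Phi_eq_zero {m i j : Fin n} (h : V.coord j i (f m) ≠ 0) :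
    LinearIndependent F ![f m, f i, f j] := by
  have hself := coord_apply_self_of_Phi_eq_zero hf
  have hcyc := coord_cyclic_of_Phi_eq_zero hf
  rw [Fintype.linearIndependent_iff]
  intro g hg
  have eval (a b : Fin n) :
      g 0 * V.coord a b (f m) + g 1 * V.coord a b (f i) + g 2 * V.coord a b (f j) = 0 := by
    simpa [Fin.sum_univ_three] using congr_arg (V.coord a b) hg
  have h₀ := eval j i
  have h₁ := eval m j
  have h₂ := eval m i
  rw [hself j i, V.coord_swap j i (f j), hself i j, neg_zero] at h₀
  rw [V.coord_swap m j (f m), hself j m, neg_zero, hself m j, hcyc i m j, hcyc j i m] at h₁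
  rw [V.coord_swap m i (f m), hself i m, neg_zero, hself m i, hcyc j m i, hcyc i j m,
    V.coord_swap i j (f m)] at h₂
  intro r
  fin_cases r
  · simpa [h] using h₀
  · simpa [h] using h₁
  · simpa [h] using h₂

end PhiKernel

lemma eq_zero_of_Phi_eq_zero {X : Submodule F (V F n)} (hX : Module.finrank F X < 3)
    {f : Fin n → V F n} (hfX : ∀ k, f k ∈ X) (hf : Phi F n f = 0) : f = 0 := by
  by_contra hne
  obtain ⟨m, hm⟩ := Function.ne_iff.mp hne
  obtain ⟨⟨⟨j, i⟩, hij⟩, hq⟩ := Function.ne_iff.mp hm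
  have hli := linearIndependent_of_Phi_eq_zero hf (m := m) (by rwa [V.coord_of_lt hij])
  have hspan : span F (Set.range ![f m, f i, f j]) ≤ X := by
    rw [span_le, Set.range_subset_iff]
    intro r
    fin_cases r <;> exact hfX _
  have := (finrank_span_eq_card hli).symm.trans_le (Submodule.finrank_mono hspan)
  rw [Fintype.card_fin] at this
  omega

lemma finrank_starV {X : Submodule F (V F n)} (hX : Module.finrank F X < 3) :
    Module.finrank F (starV F n X) = n * Module.finrank F X := by
  let Ψ := Phi F n ∘ₗ LinearMap.piMap fun _ : Fin n => X.subtype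
  have hrange : LinearMap.range Ψ = starV F n X := by
    have hpi : LinearMap.range (LinearMap.piMap fun _ : Fin n => X.subtype) =
        pi Set.univ fun _ => X :=
      SetLike.coe_injective <| by
        rw [LinearMap.coe_range, LinearMap.coe_piMap, Set.range_piMap, coe_pi]
        simp
    rw [LinearMap.range_comp, hpi, ← iSup_map_single, Submodule.map_iSup, starV]
    simp_rw [← Submodule.map_comp, Phi_comp_single]
  have hinj : Function.Injective Ψ := by
    rw [← LinearMap.ker_eq_bot, LinearMap.ker_eq_bot']
    intro g hg
    have := eq_zero_of_Phi_eq_zero hX (fun k => (g k).2) hg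
    ext k : 1
    exact Subtype.ext (congr_fun this k)
  rw [← hrange, LinearMap.finrank_range_of_inj hinj, Module.finrank_pi_fintype]
  simp

end

theorem statement8_general (p : ℕ) [Fact p.Prime] (n : ℕ)
    (X : Submodule (ZMod p) (V (ZMod p) n)) :
    (Module.finrank (ZMod p) ↥X = 1 →
      Module.finrank (ZMod p) ↥(starV (ZMod p) n X) = n) ∧
    (Module.finrank (ZMod p) ↥X = 2 →
      Module.finrank (ZMod p) ↥(starV (ZMod p) n X) = 2 * n) := by
  constructor <;> intro hX <;> rw [finrank_starV (by omega), hX]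
  · exact mul_one n
  · exact mul_comm n 2

/-- If `X ≤ V(n)` with `dim X = 1` then `dim X* = n`; if `dim X = 2` then `dim X* = 2n`. -/
theorem statement8 (p : ℕ) [Fact p.Prime] (hp2 : p ≠ 2) (n : ℕ) (hn : 1 < n)
    (X : Submodule (ZMod p) (V (ZMod p) n)) :
    (Module.finrank (ZMod p) ↥X = 1 →
      Module.finrank (ZMod p) ↥(starV (ZMod p) n X) = n) ∧
    (Module.finrank (ZMod p) ↥X = 2 →
      Module.finrank (ZMod p) ↥(starV (ZMod p) n X) = 2 * n) :=
  statement8_general p n X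
end

section
/- Let d be a positive integer and write d = C(t,2) + s with 0 < s ≤ t. Then r(d) = C(t−1, 2) + (s − 1). Equivalently, r(d) equals the number of positive integers strictly less than d that are not triangular numbers (a triangular number being one of the form C(m+1,2) for some m ≥ 0). -/
/-- `r(d)`: the largest integer `r` with `r ≤ d` and `r ≤ C(d − r, 2)`. -/
def rfun (d : ℕ) : ℕ :=
  Nat.findGreatest (fun r => r ≤ d ∧ r ≤ (d - r).choose 2) d

lemma choose_two_succ (n : ℕ) : (n + 1).choose 2 = n.choose 2 + n := by
  rw [Nat.choose_succ_succ]
  simp [Nat.choose_one_right]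
  omega

lemma choose_two_strictMonoOn {a b : ℕ} (ha : 1 ≤ a) (hab : a < b) :
    a.choose 2 < b.choose 2 := by
  have h1 : a.choose 2 < (a + 1).choose 2 := by
    rw [choose_two_succ]; omega
  have h2 : (a + 1).choose 2 ≤ b.choose 2 := Nat.choose_le_choose 2 (by omega)
  omega

/-- If `d = C(t,2) + s` with `0 < s ≤ t`, then `r(d) = C(t−1,2) + (s−1)`; equivalently,
`r(d)` is the number of positive integers strictly less than `d` which are not triangular
numbers (numbers of the form `C(m+1,2)`, `m ≥ 0`). -/
theorem statement14 (d t s : ℕ) (hd : 0 < d) (hs : 0 < s) (hst : s ≤ t)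
    (hdts : d = t.choose 2 + s) :
    rfun d = (t - 1).choose 2 + (s - 1) ∧
    rfun d = {k : ℕ | 0 < k ∧ k < d ∧ ¬∃ m : ℕ, k = (m + 1).choose 2}.ncard := by
  obtain ⟨t', rfl⟩ : ∃ t', t = t' + 1 := ⟨t - 1, by omega⟩
  obtain ⟨s', rfl⟩ : ∃ s', s = s' + 1 := ⟨s - 1, by omega⟩
  have hct : (t' + 1).choose 2 = t'.choose 2 + t' := choose_two_succ t'
  have hd' : d = t'.choose 2 + t' + s' + 1 := by omega
  have hs't' : s' ≤ t' := by omega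
  set m := t'.choose 2 + s' with hm
  have hfirst : rfun d = m := by
    rw [rfun, Nat.findGreatest_eq_iff]
    refine ⟨by omega, fun _ => ⟨by omega, ?_⟩, fun n hn hn' hP => ?_⟩
    · have : d - m = t' + 1 := by omega
      rw [this, hct]; omega
    · obtain ⟨hn1, hn2⟩ := hP
      have hk : d - n ≤ t' := by omega
      have : (d - n).choose 2 ≤ t'.choose 2 := Nat.choose_le_choose 2 hk
      omega
  have hset : {k : ℕ | 0 < k ∧ k < d ∧ ¬∃ m : ℕ, k = (m + 1).choose 2} =
      ↑((Finset.Ioo 0 d) \ ((Finset.Icc 2 (t' + 1)).image (·.choose 2))) := by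
    ext k
    simp only [Set.mem_setOf_eq, Finset.coe_sdiff, Set.mem_diff, Finset.coe_Ioo,
      Set.mem_Ioo, Finset.coe_image, Set.mem_image, Finset.mem_coe, Finset.mem_Icc]
    constructor
    · rintro ⟨hk0, hkd, hnt⟩
      refine ⟨⟨hk0, hkd⟩, ?_⟩
      rintro ⟨j, ⟨hj2, hjt⟩, rfl⟩
      exact hnt ⟨j - 1, by rw [Nat.sub_add_cancel (by omega)]⟩
    · rintro ⟨⟨hk0, hkd⟩, hni⟩
      refine ⟨hk0, hkd, ?_⟩
      rintro ⟨j, rfl⟩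
      apply hni
      refine ⟨j + 1, ⟨?_, ?_⟩, rfl⟩
      · have hj0 : j ≠ 0 := by
          rintro rfl
          simp [Nat.choose] at hk0
        omega
      · by_contra h
        have : (t' + 2).choose 2 ≤ (j + 1).choose 2 := Nat.choose_le_choose 2 (by omega)
        have h2 : (t' + 2).choose 2 = (t' + 1).choose 2 + (t' + 1) := choose_two_succ (t' + 1)
        omega
  have hsub : (Finset.Icc 2 (t' + 1)).image (·.choose 2) ⊆ Finset.Ioo 0 d := by
    intro x hx
    simp only [Finset.mem_image, Finset.mem_Icc] at hx
    obtain ⟨j, ⟨hj2, hjt⟩, rfl⟩ := hx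
    have h1 : (1 : ℕ).choose 2 < j.choose 2 := choose_two_strictMonoOn le_rfl (by omega)
    have h2 : j.choose 2 ≤ (t' + 1).choose 2 := Nat.choose_le_choose 2 hjt
    rw [Finset.mem_Ioo]
    have h0 : (1 : ℕ).choose 2 = 0 := rfl
    omega
  have hcardim : ((Finset.Icc 2 (t' + 1)).image (·.choose 2)).card = t' := by
    rw [Finset.card_image_of_injOn]
    · rw [Nat.card_Icc]; omega
    · intro a ha b hb hab
      simp only [Finset.coe_Icc, Set.mem_Icc] at ha hb
      by_contra hne
      rcases Nat.lt_or_ge a b with h | h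
      · exact absurd hab (Nat.ne_of_lt (choose_two_strictMonoOn (by omega) h))
      · have : b < a := by omega
        exact absurd hab.symm (Nat.ne_of_lt (choose_two_strictMonoOn (by omega) this))
  refine ⟨hfirst, ?_⟩
  rw [hfirst, hset, Set.ncard_coe_finset, Finset.card_sdiff_of_subset hsub, hcardim, Nat.card_Ioo]
  omega
end

section
/- Fix n > 1 and let α = (α₁, …, α_n) ∈ Fⁿ be a nonzero vector. Then Ψ(α)ⁿ ∩ ker(Φ_n) is trivial: if (x₁, …, x_n) ∈ ker(Φ_n) and every component x_i lies in Ψ(α), then x₁ = ⋯ = x_n = 0. -/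
open Submodule

variable (F : Type*) [Field F] (n : ℕ)

/-- For `α = (α₁,…,α_n) ∈ Fⁿ`, `Ψ(α)` is the subspace of `V(n)` spanned by the `n` vectors
`y_i = Σ_j α_j · v[j,i]`, `i = 1,…,n`. -/
noncomputable def Psi (α : Fin n → F) : Submodule F (V F n) :=
  Submodule.span F (Set.range fun i : Fin n => ∑ j : Fin n, α j • v F n j i)

/-!
Every element of `Ψ(α)` is a bivector `α ∧ c`, so `x_k = α ∧ c_k` and its coefficients are
`X_k(j,i) = α_j c_{k,i} - α_i c_{k,j}`. The coefficient of `w[J,I,K]` in `Φ_n(x)` is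
`X_K(J,I) + [I < K] X_I(J,K)`, so `Φ_n(x) = 0` gives `X_I(J,I) = 0` and
`X_K(J,I) + X_I(J,K) = 0` for `I < J`, `I < K`. These force `X_m(a,b) = 0` when `m < a, b`:
if `α_m ≠ 0` by the Plücker relation `α_m X(a,b) = α_b X(a,m) - α_a X(b,m)`, and if `α_m = 0`
the relations become monomial. The second relation then kills the remaining coefficients.
-/

lemma w_apply_s17 (a b c : Fin n) (t : WIdx n) :
    w F n a b c t = if t.1 = (a, b, c) then 1 else 0 := by
  have ht := t.2
  unfold w
  split_ifs <;> simp_all [Pi.single_apply, Subtype.ext_iff]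

lemma v_apply (a b : Fin n) (q : VIdx n) :
    v F n a b q = if q.1 = (a, b) then 1 else if q.1 = (b, a) then -1 else 0 := by
  have hq := q.2
  unfold v
  split_ifs <;> simp_all [Pi.single_apply, Subtype.ext_iff]
  all_goals grind

lemma v_swap (j i : Fin n) : v F n i j = -v F n j i := by
  unfold v
  rcases lt_trichotomy i j with h | rfl | h
  · simp [h, h.not_gt]
  · simp
  · simp [h, h.not_gt]

variable {F n}

/-- The coefficient of `v[j,i]` in `u`. -/
noncomputable def vCoeff (u : V F n) (j i : Fin n) : F := u ⬝ᵥ v F n j i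

lemma vCoeff_of_lt (u : V F n) {j i : Fin n} (h : i < j) : vCoeff u j i = u ⟨(j, i), h⟩ := by
  simp [vCoeff, v, h, dotProduct_single]

lemma vCoeff_swap (u : V F n) (j i : Fin n) : vCoeff u i j = -vCoeff u j i := by
  rw [vCoeff, vCoeff, v_swap, dotProduct_neg]

lemma vCoeff_self (u : V F n) (i : Fin n) : vCoeff u i i = 0 := by
  simp [vCoeff, v]

lemma phi_apply_mk_s17 (k : Fin n) (u : V F n) {J I K : Fin n} (h : I < J ∧ I ≤ K) :
    phi F n k u ⟨(J, I, K), h⟩ =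
      (if k = K then vCoeff u J I else 0) + if k = I ∧ I < K then vCoeff u J K else 0 := by
  -- the row of `φ_k` at `w[J,I,K]`, written in the basis `v`
  have key : (fun q : VIdx n => (if q.1.2 ≤ k then w F n q.1.1 q.1.2 k
      else w F n q.1.1 k q.1.2 - w F n q.1.2 k q.1.1) ⟨(J, I, K), h⟩) =
      (if k = K then v F n J I else 0) + if k = I ∧ I < K then v F n J K else 0 := by
    funext ⟨⟨a, b⟩, hab⟩
    simp only [apply_ite (fun f : W F n => f ⟨(J, I, K), h⟩), Pi.sub_apply, w_apply_s17, Pi.add_apply,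
      apply_ite (fun f : V F n => f ⟨(a, b), hab⟩), v_apply, Pi.zero_apply, Prod.mk.injEq]
    split_ifs <;> first
      | (exfalso; simp only [Fin.ext_iff, Fin.lt_def, Fin.le_def] at *; omega)
      | norm_num
  calc phi F n k u ⟨(J, I, K), h⟩
      = u ⬝ᵥ fun q : VIdx n => (if q.1.2 ≤ k then w F n q.1.1 q.1.2 k
          else w F n q.1.1 k q.1.2 - w F n q.1.2 k q.1.1) ⟨(J, I, K), h⟩ := by
        rw [phi, Module.Basis.constr_apply_fintype, Finset.sum_apply]
        simp only [Pi.basisFun_equivFun, LinearEquiv.refl_apply, Pi.smul_apply, smul_eq_mul]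
        rfl
    _ = _ := by rw [key]; split_ifs <;> simp [vCoeff, dotProduct_add]

lemma Phi_apply_mk_s17 (x : Fin n → V F n) {J I K : Fin n} (h : I < J ∧ I ≤ K) :
    Phi F n x ⟨(J, I, K), h⟩ = vCoeff (x K) J I + if I < K then vCoeff (x I) J K else 0 := by
  simp [Phi, phi_apply_mk_s17, Finset.sum_add_distrib, ite_and]

lemma vCoeff_eq_zero_of_Phi_eq_zero {x : Fin n → V F n} (hx : Phi F n x = 0) {I J : Fin n}
    (h : I < J) : vCoeff (x I) J I = 0 := by
  simpa [Phi_apply_mk_s17] using congrFun hx ⟨(J, I, I), h, le_rfl⟩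

lemma vCoeff_add_vCoeff_eq_zero_of_Phi_eq_zero {x : Fin n → V F n} (hx : Phi F n x = 0)
    {I J K : Fin n} (hIJ : I < J) (hIK : I < K) : vCoeff (x K) J I + vCoeff (x I) J K = 0 := by
  simpa [Phi_apply_mk_s17, hIK] using congrFun hx ⟨(J, I, K), hIJ, hIK.le⟩

/-- `wedge a b` is the bivector `a ∧ b`, with `v[j,i]` read as `e_j ∧ e_i`. -/
def wedge (a : Fin n → F) : (Fin n → F) →ₗ[F] V F n where
  toFun b q := a q.1.1 * b q.1.2 - a q.1.2 * b q.1.1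
  map_add' b b' := by ext; simp only [Pi.add_apply]; ring
  map_smul' r b := by ext; simp only [Pi.smul_apply, smul_eq_mul, RingHom.id_apply]; ring

lemma vCoeff_wedge (a b : Fin n → F) (j i : Fin n) :
    vCoeff (wedge a b) j i = a j * b i - a i * b j := by
  rcases lt_trichotomy i j with h | rfl | h
  · exact vCoeff_of_lt _ h
  · rw [vCoeff_self, sub_self]
  · rw [vCoeff_swap, vCoeff_of_lt _ h, wedge, LinearMap.coe_mk, AddHom.coe_mk, neg_sub]

lemma sum_smul_v_eq_wedge (α : Fin n → F) (i : Fin n) :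
    ∑ j, α j • v F n j i = wedge α (Pi.single i 1) := by
  ext ⟨⟨a, b⟩, hab⟩
  have hne : a ≠ b := (show b < a from hab).ne'
  simp only [v_apply, Finset.sum_apply, Pi.smul_apply, smul_eq_mul, wedge, LinearMap.coe_mk,
    AddHom.coe_mk, Pi.single_apply, Prod.mk.injEq]
  by_cases hb : b = i
  · subst hb
    simp [hne]
  · by_cases ha : a = i
    · subst ha
      simp [hb]
    · simp [ha, hb]

lemma Psi_le_range_wedge (α : Fin n → F) : Psi F n α ≤ LinearMap.range (wedge α) :=
  span_le.mpr <| by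
    rintro _ ⟨i, rfl⟩
    exact ⟨Pi.single i 1, (sum_smul_v_eq_wedge α i).symm⟩

section WedgeKernel

variable {α : Fin n → F} {c : Fin n → Fin n → F}

lemma vCoeff_wedge_eq_zero_of_lt_of_lt
    (h₁ : ∀ I J, I < J → vCoeff (wedge α (c I)) J I = 0)
    (h₂ : ∀ I J K, I < J → I < K → vCoeff (wedge α (c K)) J I + vCoeff (wedge α (c I)) J K = 0)
    {m a b : Fin n} (ha : m < a) (hb : m < b) : vCoeff (wedge α (c m)) a b = 0 := by
  simp only [vCoeff_wedge] at h₁ h₂ ⊢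
  by_cases hm : α m = 0
  · have e_a := h₂ m a a ha ha
    have e_ab := h₂ m a b ha hb
    have e_ba := h₂ m b a hb ha
    by_cases ha0 : α a = 0
    · linear_combination e_ab + c b a * hm - c b m * ha0
    · have hcam : c a m = 0 := by
        refine (mul_eq_zero.mp ?_).resolve_left ha0
        linear_combination e_a + c a a * hm
      linear_combination -e_ba + α b * hcam - c a b * hm
  · have h : α m * (α a * c m b - α b * c m a) = 0 := by
      linear_combination α b * h₁ m a ha - α a * h₁ m b hb
    exact (mul_eq_zero.mp h).resolve_left hm

lemma vCoeff_wedge_eq_zero_of_lt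
    (h₁ : ∀ I J, I < J → vCoeff (wedge α (c I)) J I = 0)
    (h₂ : ∀ I J K, I < J → I < K → vCoeff (wedge α (c K)) J I + vCoeff (wedge α (c I)) J K = 0)
    {k a b : Fin n} (hba : b < a) : vCoeff (wedge α (c k)) a b = 0 := by
  rcases lt_trichotomy k b with h | rfl | h
  · exact vCoeff_wedge_eq_zero_of_lt_of_lt h₁ h₂ (h.trans hba) h
  · exact h₁ k a hba
  · simpa [vCoeff_wedge_eq_zero_of_lt_of_lt h₁ h₂ hba h] using h₂ b a k hba h

end WedgeKernel

theorem statement17_general (p : ℕ) [Fact p.Prime] (n : ℕ)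
    (α : Fin n → ZMod p)
    (x : Fin n → V (ZMod p) n) (hx : Phi (ZMod p) n x = 0)
    (hxP : ∀ i : Fin n, x i ∈ Psi (ZMod p) n α) :
    x = 0 := by
  choose c hc using fun k => Psi_le_range_wedge α (hxP k)
  obtain rfl : x = fun k => wedge α (c k) := funext fun k => (hc k).symm
  funext k q
  refine (vCoeff_of_lt (wedge α (c k)) q.2).symm.trans ?_
  exact vCoeff_wedge_eq_zero_of_lt (fun _ _ => vCoeff_eq_zero_of_Phi_eq_zero hx)
    (fun _ _ _ => vCoeff_add_vCoeff_eq_zero_of_Phi_eq_zero hx) q.2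

/-- For nonzero `α ∈ Fⁿ`, `Ψ(α)ⁿ ∩ ker(Φ_n)` is trivial: if `(x₁,…,x_n) ∈ ker(Φ_n)` and
every `x_i ∈ Ψ(α)`, then all `x_i = 0`. -/
theorem statement17 (p : ℕ) [Fact p.Prime] (hp2 : p ≠ 2) (n : ℕ) (hn : 1 < n)
    (α : Fin n → ZMod p) (hα : α ≠ 0)
    (x : Fin n → V (ZMod p) n) (hx : Phi (ZMod p) n x = 0)
    (hxP : ∀ i : Fin n, x i ∈ Psi (ZMod p) n α) :
    x = 0 :=
  statement17_general p n α x hx hxP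
end
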